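/- arXiv:1711.09149 — 4 statements merged into one kernel-verified Lean document; each statement's English description precedes it below -/
import Mathlib

section
/- Let D_n (n ≥ 3) be the DFA with state set Q_n = {0,…,n−1}, alphabet {a,b,c,d}, initial state 0, final state set {n−1}, where a acts as the cycle (1,…,n−1) on states 1,…,n−1 and fixes 0, b acts as the transposition (0,1), c sends 1 to 0 and fixes all other states, and d is the identity. Then D_n is minimal: all states are reachable from 0, and no two distinct states accept the same language. -/
/-- The DFA `D_n` of Definition 1 (alphabet `{a,b,c,d}` encoded as `Fin 4` with
`a = 0`, `b = 1`, `c = 2`, `d = 3`; states `{0,…,n−1}`; initial state `0`;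
unique final state `n−1`; `a : (1,…,n−1)`, `b : (0,1)`, `c : (1 → 0)`, `d : identity`)
is minimal: every state is reachable from the initial state, and distinct states
accept distinct languages. -/
theorem definition_one_dfa_is_minimal (n : ℕ) (hn : 3 ≤ n) (M : DFA (Fin 4) (Fin n))
    (hstart : M.start = ⟨0, by omega⟩)
    (haccept : M.accept = {⟨n - 1, by omega⟩})
    (ha : ∀ q : Fin n,
      (M.step q 0).val = if q.val = 0 then 0 else if q.val = n - 1 then 1 else q.val + 1)
    (hb : ∀ q : Fin n,
      (M.step q 1).val = if q.val = 0 then 1 else if q.val = 1 then 0 else q.val)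
    (hc : ∀ q : Fin n, (M.step q 2).val = if q.val = 1 then 0 else q.val)
    (hd : ∀ q : Fin n, M.step q 3 = q) :
    (∀ q : Fin n, ∃ w : List (Fin 4), M.evalFrom M.start w = q) ∧
    (∀ p q : Fin n,
      {w : List (Fin 4) | M.evalFrom p w ∈ M.accept} =
        {w : List (Fin 4) | M.evalFrom q w ∈ M.accept} → p = q) := by
  -- key lemma: evaluation of a^k from a nonzero state
  have evalA : ∀ (k : ℕ) (q : Fin n), q.val ≠ 0 →
      (M.evalFrom q (List.replicate k 0)).val = (q.val - 1 + k) % (n - 1) + 1 := by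
    intro k
    induction k with
    | zero =>
      intro q hq
      simp [DFA.evalFrom]
      have : q.val < n := q.isLt
      rw [Nat.mod_eq_of_lt (by omega)]
      omega
    | succ k ih =>
      intro q hq
      rw [List.replicate_succ, DFA.evalFrom, List.foldl_cons]
      have hstep := ha q
      rw [if_neg hq] at hstep
      have hne : (M.step q 0).val ≠ 0 := by
        by_cases h : q.val = n - 1 <;> simp [h] at hstep <;> omega
      have := ih (M.step q 0) hne
      rw [DFA.evalFrom] at this
      rw [this]
      by_cases h : q.val = n - 1
      · rw [if_pos h] at hstep
        rw [hstep, h]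
        congr 1
        have h1 : 1 - 1 + k = k := by omega
        rw [h1]
        have h2 : n - 1 - 1 + (k + 1) = (n - 1) + k := by omega
        rw [h2, Nat.add_mod_left]
      · rw [if_neg h] at hstep
        rw [hstep]
        congr 2
        omega
  have eval0 : ∀ (k : ℕ) (q : Fin n), q.val = 0 →
      (M.evalFrom q (List.replicate k 0)).val = 0 := by
    intro k
    induction k with
    | zero => intro q hq; simpa [DFA.evalFrom]
    | succ k ih =>
      intro q hq
      rw [List.replicate_succ, DFA.evalFrom, List.foldl_cons]
      have hstep := ha q
      rw [if_pos hq] at hstep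
      exact ih (M.step q 0) hstep
  have hn1 : 1 ≤ n - 1 := by omega
  constructor
  · intro q
    by_cases hq : q.val = 0
    · exact ⟨[], by rw [hstart]; apply Fin.ext; simp [DFA.evalFrom]; omega⟩
    · refine ⟨1 :: List.replicate (q.val - 1) 0, ?_⟩
      rw [DFA.evalFrom, List.foldl_cons, hstart]
      have hstep := hb ⟨0, by omega⟩
      simp at hstep
      have hne : (M.step ⟨0, by omega⟩ 1).val ≠ 0 := by omega
      have := evalA (q.val - 1) _ hne
      rw [DFA.evalFrom] at this
      apply Fin.ext
      rw [this, hstep]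
      have hlt : q.val < n := q.isLt
      rw [Nat.mod_eq_of_lt (by omega)]
      omega
  · intro p q hpq
    by_contra hne
    have hkey : ∀ (r : Fin n) (k : ℕ), (M.evalFrom r (List.replicate k 0) ∈ M.accept) ↔
        (r.val ≠ 0 ∧ (r.val - 1 + k) % (n - 1) = n - 2) := by
      intro r k
      rw [haccept, Set.mem_singleton_iff]
      constructor
      · intro h
        have hv : (M.evalFrom r (List.replicate k 0)).val = n - 1 := by rw [h]
        by_cases hr : r.val = 0
        · rw [eval0 k r hr] at hv; omega
        · rw [evalA k r hr] at hv
          exact ⟨hr, by omega⟩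
      · rintro ⟨hr, hm⟩
        apply Fin.ext
        rw [evalA k r hr, hm]
        simp only [Fin.val_mk]
        omega
    have hiff := Set.ext_iff.mp hpq
    by_cases hp : p.val = 0
    · by_cases hq : q.val = 0
      · exact hne (Fin.ext (by omega))
      · have := (hiff (List.replicate (n - 1 - q.val) 0)).mpr
        simp only [Set.mem_setOf_eq, hkey] at this
        have hc2 : (q.val - 1 + (n - 1 - q.val)) % (n - 1) = n - 2 := by
          have hlt : q.val < n := q.isLt
          rw [Nat.mod_eq_of_lt (by omega)]
          omega
        exact (this ⟨hq, hc2⟩).1 hp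
    · have := (hiff (List.replicate (n - 1 - p.val) 0)).mp
      simp only [Set.mem_setOf_eq, hkey] at this
      have hc2 : (p.val - 1 + (n - 1 - p.val)) % (n - 1) = n - 2 := by
        have hlt : p.val < n := p.isLt
        rw [Nat.mod_eq_of_lt (by omega)]
        omega
      obtain ⟨hq, hm⟩ := this ⟨hp, hc2⟩
      -- now derive p = q
      apply hne
      apply Fin.ext
      set x := q.val - 1 + (n - 1 - p.val) with hx
      have hxlt : x < 2 * (n - 1) := by
        have := q.isLt; have := p.isLt
        omega
      have hdm := Nat.div_add_mod x (n - 1)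
      have hdiv : x / (n - 1) < 2 := Nat.div_lt_of_lt_mul (by omega)
      have hplt : p.val < n := p.isLt
      have hqlt : q.val < n := q.isLt
      interval_cases h : x / (n - 1) <;> omega
end

section
/- For a regular language L with state complexity n, the number of atoms of L equals the state complexity of the reverse L^R; in particular the number of atoms is at most 2^n. -/
/-- The state complexity of a language: the least number of states of a DFA accepting it. -/
noncomputable def stateComplexity {α : Type*} (L : Language α) : ℕ :=
  sInf {k : ℕ | ∃ M : DFA α (Fin k), M.accepts = L}

/-- The atoms of `L` are the classes of the left congruence
`x ≡ y ↔ ∀ u, (ux ∈ L ↔ uy ∈ L)`; their number is `Nat.card` of the quotient. -/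
noncomputable def numberOfAtoms {α : Type*} (L : Language α) : ℕ :=
  Nat.card (Quot fun x y : List α => ∀ u : List α, u ++ x ∈ L ↔ u ++ y ∈ L)

section Aux

variable {α : Type*}

/-- If the relation `r` is implied by equality under a map into a finite type,
then the quotient by `r` is finite with card at most that of the codomain. -/
lemma quot_card_le_of_map {β : Type*} [Finite β] (r : List α → List α → Prop)
    (f : List α → β) (hf : ∀ x y, f x = f y → r x y) :
    Nat.card (Quot r) ≤ Nat.card β ∧ Finite (Quot r) := by
  classical
  have hg : ∃ g : Set.range f → Quot r, Function.Surjective g := by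
    refine ⟨fun s => Quot.mk r s.2.choose, ?_⟩
    intro q
    induction q using Quot.ind with
    | _ x =>
      refine ⟨⟨f x, x, rfl⟩, Quot.sound (hf _ _ ?_)⟩
      exact (⟨x, rfl⟩ : f x ∈ Set.range f).choose_spec
  obtain ⟨g, hgs⟩ := hg
  have h1 : Nat.card (Quot r) ≤ Nat.card (Set.range f) :=
    Nat.card_le_card_of_surjective g hgs
  have h2 : Nat.card (Set.range f) ≤ Nat.card β :=
    Nat.card_le_card_of_injective _ Subtype.coe_injective
  exact ⟨h1.trans h2, Finite.of_surjective g hgs⟩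

/-- Reindex a DFA along an equivalence of state types. -/
def myReindex {σ τ : Type*} (e : σ ≃ τ) (M : DFA α σ) : DFA α τ where
  step s a := e (M.step (e.symm s) a)
  start := e M.start
  accept := {s | e.symm s ∈ M.accept}

lemma myReindex_eval {σ τ : Type*} (e : σ ≃ τ) (M : DFA α σ) (w : List α) :
    (myReindex e M).eval w = e (M.eval w) := by
  induction w using List.reverseRecOn with
  | nil => rfl
  | append_singleton w a ih =>
      rw [DFA.eval_append_singleton, DFA.eval_append_singleton, ih]
      simp [myReindex]

lemma myReindex_accepts {σ τ : Type*} (e : σ ≃ τ) (M : DFA α σ) :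
    (myReindex e M).accepts = M.accepts := by
  ext w
  rw [DFA.mem_accepts, DFA.mem_accepts, myReindex_eval]
  simp [myReindex]

end Aux

/-- For a regular language `L` of state complexity `n`, the number of atoms of `L`
equals the state complexity of the reverse `L^R`; in particular it is at most `2^n`. -/
theorem number_of_atoms_eq_reverse_complexity {α : Type*} (n : ℕ) (L : Language α)
    (hreg : ∃ M : DFA α (Fin n), M.accepts = L)
    (hsc : stateComplexity L = n) :
    numberOfAtoms L = stateComplexity ({w : List α | w.reverse ∈ L} : Language α) ∧
    numberOfAtoms L ≤ 2 ^ n := by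
  classical
  obtain ⟨M, hM⟩ := hreg
  set r : List α → List α → Prop := fun x y => ∀ u : List α, u ++ x ∈ L ↔ u ++ y ∈ L with hr
  set LR : Language α := {w : List α | w.reverse ∈ L} with hLR
  -- the map into `Fin n → Prop` classifying atoms
  have key := quot_card_le_of_map r (fun x => (fun q => M.evalFrom q x ∈ M.accept))
    (by
      intro x y hxy u
      have h := congrFun hxy (M.eval u)
      rw [← hM, DFA.mem_accepts, DFA.mem_accepts, DFA.eval, DFA.evalFrom_of_append,
        DFA.evalFrom_of_append]
      exact h.to_iff)
  obtain ⟨hcard, hfin⟩ := key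
  have hcard2 : Nat.card (Fin n → Prop) = 2 ^ n := by
    simp [Nat.card_eq_fintype_card]
  -- the atoms quotient is finite
  haveI : Finite (Quot r) := hfin
  haveI : Fintype (Quot r) := Fintype.ofFinite _
  -- Build a DFA for `LR` on the atoms quotient
  have hstep : ∀ (a : α) (x y : List α), r x y → r (a :: x) (a :: y) := by
    intro a x y h u
    have := h (u ++ [a])
    simpa using this
  let N : DFA α (Quot r) :=
    { step := fun c a => Quot.map (fun x => a :: x) (hstep a) c
      start := Quot.mk r []
      accept := {c | Quot.lift (fun x => x ∈ L) (fun x y h => by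
        have := h []
        simpa using this) c} }
  have hNeval : ∀ w : List α, N.eval w = Quot.mk r w.reverse := by
    intro w
    induction w using List.reverseRecOn with
    | nil => rfl
    | append_singleton w a ih =>
        rw [DFA.eval_append_singleton, ih]
        show Quot.mk r (a :: w.reverse) = _
        simp
  have hNacc : N.accepts = LR := by
    ext w
    rw [DFA.mem_accepts, hNeval]
    rfl
  -- transport to `Fin (numberOfAtoms L)`
  have hq : numberOfAtoms L = Nat.card (Quot r) := rfl
  let e : Quot r ≃ Fin (numberOfAtoms L) :=
    (Fintype.equivFin _).trans (finCongr (by rw [hq, Nat.card_eq_fintype_card]))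
  have hmem : numberOfAtoms L ∈ {k : ℕ | ∃ M : DFA α (Fin k), M.accepts = LR} :=
    ⟨myReindex e N, by rw [myReindex_accepts, hNacc]⟩
  -- every DFA for LR has at least `numberOfAtoms L` states
  have hle : ∀ k ∈ {k : ℕ | ∃ M : DFA α (Fin k), M.accepts = LR}, numberOfAtoms L ≤ k := by
    rintro k ⟨P, hP⟩
    have := quot_card_le_of_map r (fun x => P.eval x.reverse)
      (by
        intro x y hxy u
        have hxy' : P.eval x.reverse = P.eval y.reverse := hxy
        have hx2 : ∀ z : List α, u ++ z ∈ L ↔ P.evalFrom (P.eval z.reverse) u.reverse ∈ P.accept := by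
          intro z
          have h1 : u ++ z ∈ L ↔ z.reverse ++ u.reverse ∈ LR := by
            show _ ↔ (z.reverse ++ u.reverse).reverse ∈ L
            simp
          rw [h1, ← hP, DFA.mem_accepts, DFA.eval, DFA.evalFrom_of_append]
        rw [hx2 x, hx2 y, hxy'])
    calc numberOfAtoms L = Nat.card (Quot r) := hq
      _ ≤ Nat.card (Fin k) := this.1
      _ = k := by simp
  constructor
  · refine le_antisymm ?_ ?_
    · exact hle _ (Nat.sInf_mem ⟨_, hmem⟩)
    · exact Nat.sInf_le hmem
  · calc numberOfAtoms L = Nat.card (Quot r) := hq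
      _ ≤ Nat.card (Fin n → Prop) := hcard
      _ = 2 ^ n := hcard2
end

section
/- For any regular language L with state complexity n, the state complexity of L* is at most 2^{n−1} + 2^{n−2}. -/
open scoped Computability

/-!
Restarting a DFA `M` for `L` at its initial state `q₀` after every accepting state gives an NFA
for `L∗`, and we run the subset construction on it. A subset produced this way that contains an
accepting state `f ≠ q₀` also contains `q₀`, so besides a fresh initial state (encoded by `∅`)
only the `2^(n-1) - 1` nonempty subsets avoiding `f` and the `2^(n-2)` subsets containing both `f`
and `q₀` can occur. If `M` has no accepting state other than `q₀`, then `L∗` is `{ε}` or `L`.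
-/

namespace Language

variable {α : Type*} {l : Language α} {w : List α}

theorem exists_mem_kstar_append_mem_of_ne_nil (hw : w ∈ l∗) (hne : w ≠ []) :
    ∃ y ∈ l∗, ∃ z ∈ l, z ≠ [] ∧ y ++ z = w := by
  obtain ⟨S, rfl, hS⟩ := mem_kstar_iff_exists_nonempty.mp hw
  rcases S.eq_nil_or_concat' with rfl | ⟨S, z, rfl⟩
  · exact absurd rfl hne
  · have hz := hS z (by simp)
    exact ⟨S.flatten, join_mem_kstar fun y hy => (hS y (by simp [hy])).1, z, hz.1, hz.2, by simp⟩

end Language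

namespace DFA

variable {α σ : Type*}

def restrict (M : DFA α σ) (P : Set σ) (hstart : M.start ∈ P)
    (hstep : ∀ s ∈ P, ∀ a, M.step s a ∈ P) : DFA α P where
  step s a := ⟨M.step s a, hstep s s.2 a⟩
  start := ⟨M.start, hstart⟩
  accept := Subtype.val ⁻¹' M.accept

section restrict

variable (M : DFA α σ) {P : Set σ} (hstart : M.start ∈ P) (hstep : ∀ s ∈ P, ∀ a, M.step s a ∈ P)

theorem evalFrom_restrict (s : P) (w : List α) :
    ((M.restrict P hstart hstep).evalFrom s w : σ) = M.evalFrom s w := by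
  induction w generalizing s with
  | nil => rfl
  | cons a w ih => exact ih _

theorem accepts_restrict : (M.restrict P hstart hstep).accepts = M.accepts := by
  ext w
  change ((M.restrict P hstart hstep).eval w : σ) ∈ M.accept ↔ M.eval w ∈ M.accept
  rw [eval, evalFrom_restrict]
  rfl

end restrict

variable (M : DFA α σ)

def kstarStates (w : List α) : Set σ :=
  {q | ∃ y z, y ∈ M.accepts∗ ∧ y ++ z = w ∧ M.eval z = q}

open Classical in
/-- `∅`, which no transition reaches, encodes a fresh initial state. -/
noncomputable def kstarDFA : DFA α (Set σ) where
  step S a :=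
    let T := (M.step · a) '' (if S = ∅ then {M.start} else S)
    T ∪ {q | q = M.start ∧ (T ∩ M.accept).Nonempty}
  start := ∅
  accept := {S | S = ∅ ∨ (S ∩ M.accept).Nonempty}

theorem kstarStates_nil : M.kstarStates [] = {M.start} := by
  ext q
  simp [kstarStates, eval, Language.nil_mem_kstar, eq_comm]

theorem eval_mem_kstarStates (w : List α) : M.eval w ∈ M.kstarStates w :=
  ⟨[], w, Language.nil_mem_kstar _, rfl, rfl⟩

theorem kstarStates_append_singleton (w : List α) (a : α) :
    M.kstarStates (w ++ [a]) =
      (M.step · a) '' M.kstarStates w ∪ {q | q = M.start ∧ w ++ [a] ∈ M.accepts∗} := by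
  ext q
  constructor
  · rintro ⟨y, z, hy, h, rfl⟩
    rcases z.eq_nil_or_concat' with rfl | ⟨z, b, rfl⟩
    · obtain rfl : y = w ++ [a] := by simpa using h
      exact Or.inr ⟨rfl, hy⟩
    · obtain ⟨rfl, rfl⟩ : y ++ z = w ∧ b = a := by simpa [← List.append_assoc] using h
      exact Or.inl ⟨M.eval z, ⟨y, z, hy, rfl, rfl⟩, (M.eval_append_singleton z b).symm⟩
  · rintro (⟨_, ⟨y, z, hy, rfl, rfl⟩, rfl⟩ | ⟨rfl, h⟩)
    · exact ⟨y, z ++ [a], hy, by simp, M.eval_append_singleton z a⟩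
    · exact ⟨w ++ [a], [], h, by simp, rfl⟩

theorem kstarStates_inter_accept_nonempty_iff {w : List α} (hw : w ≠ []) :
    (M.kstarStates w ∩ M.accept).Nonempty ↔ w ∈ M.accepts∗ := by
  constructor
  · rintro ⟨q, ⟨y, z, hy, rfl, rfl⟩, hz⟩
    exact (kstar_mul_le_kstar : M.accepts∗ * M.accepts ≤ _) (Language.append_mem_mul hy hz)
  · intro h
    obtain ⟨y, hy, z, hz, -, rfl⟩ := Language.exists_mem_kstar_append_mem_of_ne_nil h hw
    exact ⟨_, ⟨y, z, hy, rfl, rfl⟩, hz⟩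

theorem image_kstarStates_inter_accept_nonempty_iff (w : List α) (a : α) :
    ((M.step · a) '' M.kstarStates w ∩ M.accept).Nonempty ↔ w ++ [a] ∈ M.accepts∗ := by
  constructor
  · intro h
    rw [← M.kstarStates_inter_accept_nonempty_iff (by simp), kstarStates_append_singleton]
    exact h.mono (Set.inter_subset_inter_left _ Set.subset_union_left)
  · intro h
    obtain ⟨y, hy, z', hz', hz'ne, h⟩ := Language.exists_mem_kstar_append_mem_of_ne_nil h (by simp)
    obtain ⟨z, b, rfl⟩ := z'.eq_nil_or_concat'.resolve_left hz'ne
    obtain ⟨rfl, rfl⟩ : y ++ z = w ∧ b = a := by simpa [← List.append_assoc] using h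
    exact ⟨_, ⟨M.eval z, ⟨y, z, hy, rfl, rfl⟩, (M.eval_append_singleton z b).symm⟩, hz'⟩

theorem eval_kstarDFA {w : List α} (hw : w ≠ []) : M.kstarDFA.eval w = M.kstarStates w := by
  induction w using List.reverseRecOn with
  | nil => exact absurd rfl hw
  | append_singleton w a ih =>
    have hprev : (if M.kstarDFA.eval w = ∅ then {M.start} else M.kstarDFA.eval w) =
        M.kstarStates w := by
      rcases eq_or_ne w [] with rfl | hw
      · rw [kstarStates_nil]
        exact if_pos rfl
      · rw [ih hw, if_neg (Set.nonempty_of_mem (M.eval_mem_kstarStates w)).ne_empty]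
    rw [eval_append_singleton]
    generalize M.kstarDFA.eval w = S at hprev
    simp only [kstarDFA, hprev, image_kstarStates_inter_accept_nonempty_iff,
      kstarStates_append_singleton]

theorem accepts_kstarDFA : M.kstarDFA.accepts = M.accepts∗ := by
  ext w
  rcases eq_or_ne w [] with rfl | hw
  · simp [mem_accepts, kstarDFA, Language.nil_mem_kstar]
  · rw [mem_accepts, eval_kstarDFA M hw, ← kstarStates_inter_accept_nonempty_iff M hw]
    simp [kstarDFA, (Set.nonempty_of_mem (M.eval_mem_kstarStates w)).ne_empty]

theorem start_mem_step_kstarDFA {f : σ} (hf : f ∈ M.accept) {S : Set σ} {a : α}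
    (hfS : f ∈ M.kstarDFA.step S a) : M.start ∈ M.kstarDFA.step S a := by
  rcases hfS with hfS | hfS
  · exact Or.inr ⟨rfl, f, hfS, hf⟩
  · exact Or.inr ⟨rfl, hfS.2⟩

theorem kstar_accepts_eq_self_of_accept_eq_singleton (h : M.accept = {M.start}) :
    M.accepts∗ = M.accepts := by
  have hmul : M.accepts * M.accepts ≤ M.accepts := by
    intro w hw
    obtain ⟨u, hu, v, hv, rfl⟩ := Language.mem_mul.mp hw
    change u ++ v ∈ M.accepts
    rw [mem_accepts, h] at hu
    rwa [mem_accepts, eval, evalFrom_of_append, ← eval, hu]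
  have hone : 1 ≤ M.accepts := by
    intro w hw
    change w ∈ M.accepts
    rw [(Language.mem_one w).mp hw, mem_accepts, h]
    rfl
  exact le_antisymm (kstar_le_of_mul_le_left hone hmul) le_kstar

theorem accepts_eq_zero_of_accept_eq_empty (h : M.accept = ∅) : M.accepts = 0 := by
  ext w
  simp [mem_accepts, h]

end DFA

theorem natCard_setOf_mem_imp_mem_le {σ : Type*} [Finite σ] {a b : σ} (hab : a ≠ b) :
    Nat.card {S : Set σ | a ∈ S → b ∈ S} ≤ 2 ^ (Nat.card σ - 1) + 2 ^ (Nat.card σ - 2) := by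
  classical
  have := Fintype.ofFinite σ
  let encode (S : {S : Set σ | a ∈ S → b ∈ S}) : Set ({a}ᶜ : Set σ) ⊕ Set ({a, b}ᶜ : Set σ) :=
    if a ∈ S.1 then .inr (Subtype.val ⁻¹' S.1) else .inl (Subtype.val ⁻¹' S.1)
  have hencode : Function.Injective encode := by
    rintro ⟨S, hS⟩ ⟨T, hT⟩ h
    simp only [Subtype.mk.injEq]
    by_cases haS : a ∈ S <;> by_cases haT : a ∈ T <;>
      simp only [encode, haS, haT, ↓reduceIte, Sum.inl.injEq, Sum.inr.injEq, reduceCtorEq] at h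
    · ext x
      by_cases hxa : x = a
      · simp [hxa, haS, haT]
      by_cases hxb : x = b
      · simp [hxb, hS haS, hT haT]
      exact Set.ext_iff.mp h ⟨x, by simp [hxa, hxb]⟩
    · ext x
      by_cases hxa : x = a
      · simp [hxa, haS, haT]
      exact Set.ext_iff.mp h ⟨x, hxa⟩
  have hcard (s : Set σ) : Nat.card (Set ↥sᶜ) = 2 ^ (Nat.card σ - s.ncard) := by
    rw [Nat.card_eq_fintype_card, Fintype.card_set, ← Nat.card_eq_fintype_card,
      Nat.card_coe_set_eq, Set.ncard_compl]
  calc _ ≤ Nat.card (Set ({a}ᶜ : Set σ) ⊕ Set ({a, b}ᶜ : Set σ)) :=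
        Nat.card_le_card_of_injective encode hencode
    _ = _ := by rw [Nat.card_sum, hcard, hcard, Set.ncard_singleton, Set.ncard_pair hab]

theorem stateComplexity_accepts_le_natCard {α σ : Type*} [Finite σ] (M : DFA α σ) :
    stateComplexity M.accepts ≤ Nat.card σ :=
  Nat.sInf_le ⟨M.reindex (Finite.equivFin σ), M.accepts_reindex _⟩

theorem stateComplexity_accepts_le_natCard_of_closed {α σ : Type*} (M : DFA α σ) (P : Set σ)
    [Finite P] (hstart : M.start ∈ P) (hstep : ∀ s ∈ P, ∀ a, M.step s a ∈ P) :
    stateComplexity M.accepts ≤ Nat.card P := by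
  rw [← M.accepts_restrict hstart hstep]
  exact stateComplexity_accepts_le_natCard _

theorem stateComplexity_one_le_two {α : Type*} : stateComplexity (1 : Language α) ≤ 2 := by
  let M : DFA α Bool := ⟨fun _ _ => false, true, {true}⟩
  have hdead (w : List α) : M.evalFrom false w = false := by
    induction w with
    | nil => rfl
    | cons _ _ ih => exact ih
  have hM : M.accepts = 1 := by
    ext (_ | ⟨a, w⟩)
    · simp [DFA.mem_accepts, M, DFA.eval, Language.mem_one]
    · simp [DFA.mem_accepts, DFA.eval, DFA.evalFrom_cons, Language.mem_one, hdead, M]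
  simpa [hM] using stateComplexity_accepts_le_natCard M

theorem star_stateComplexity_le_general {α : Type*} (n : ℕ) (L : Language α)
    (hreg : ∃ M : DFA α (Fin n), M.accepts = L) :
    stateComplexity (L∗) ≤ 2 ^ (n - 1) + 2 ^ (n - 2) := by
  obtain ⟨M, rfl⟩ := hreg
  have hpow : 1 ≤ 2 ^ (n - 2) := Nat.one_le_two_pow
  by_cases hF : M.accept ⊆ {M.start}
  · rcases Set.subset_singleton_iff_eq.mp hF with hF | hF
    · rw [M.accepts_eq_zero_of_accept_eq_empty hF, kstar_zero]
      have := Nat.one_le_two_pow (n := n - 1)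
      exact stateComplexity_one_le_two.trans (by omega)
    · rw [M.kstar_accepts_eq_self_of_accept_eq_singleton hF]
      have := Nat.lt_two_pow_self (n := n - 1)
      exact (stateComplexity_accepts_le_natCard M).trans (by rw [Nat.card_fin]; omega)
  · obtain ⟨f, hf, hfs⟩ := Set.not_subset.mp hF
    rw [← M.accepts_kstarDFA]
    refine (stateComplexity_accepts_le_natCard_of_closed M.kstarDFA {S | f ∈ S → M.start ∈ S}
      (by simp [DFA.kstarDFA]) fun _ _ _ => M.start_mem_step_kstarDFA hf).trans ?_
    simpa only [Nat.card_fin] using natCard_setOf_mem_imp_mem_le hfs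

/-- For any regular language `L` of state complexity `n`, the state complexity of
the Kleene star `L∗` is at most `2^(n−1) + 2^(n−2)`. -/
theorem star_stateComplexity_le {α : Type*} (n : ℕ) (L : Language α)
    (hreg : ∃ M : DFA α (Fin n), M.accepts = L)
    (hsc : stateComplexity L = n) :
    stateComplexity (L∗) ≤ 2 ^ (n - 1) + 2 ^ (n - 2) :=
  star_stateComplexity_le_general n L hreg
end

section
/- For m, n ≥ 3 with (m,n) ≠ (3,3), let L_m be the language of the DFA over {a,b} with states {0,…,m−1}, initial state 0, final state m−1, a: cycle (1,…,m−1), b: transposition (0,1); and let K_n be the language of the DFA obtained by swapping the roles of a and b (b: cycle (1,…,n−1), a: transposition (0,1)). Then for every binary boolean operation ∘ that depends on both arguments, the state complexity of L_m ∘ K_n is exactly mn. -/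
/-!
The product automaton recognises `L_m ∘ K_n` with `mn` states, so it suffices to show that it is
minimal. Writing `c` for the cycle and `t` for the transposition, the letters act on pairs of
states as `(c, t)` and `(t, c)`, and a word acts through an element of the group they generate.
Each projection of this group is the full symmetric group, so by Goursat's lemma the `σ` with
`(σ, 1)` in it form a normal subgroup of `S_m`. It contains a 3-cycle: for `m ≥ 4`, since
`(c, t)² = (c², 1)`, the commutator of `c²` and `t`, which is `(0 3)(0 1)`; for `m = 3`, the first
coordinate of `((c, t)(t, c))²`, whose even second coordinate is cancelled by the case `n ≥ 4`.
Hence the group contains `A_m × A_n`. As `A_m` is transitive, every pair of states is reachable;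
as `A_m` can move a given point onto the final state, or two given points off it, and `∘`
depends on both arguments, any two pairs of states are distinguished by some word.
-/

open Equiv Equiv.Perm Function

namespace DFA

variable {α σ τ : Type*}

open Classical in
@[simps]
def boolOp (f : Bool → Bool → Bool) (M : DFA α σ) (N : DFA α τ) : DFA α (σ × τ) where
  step s a := (M.step s.1 a, N.step s.2 a)
  start := (M.start, N.start)
  accept := {s | f (decide (s.1 ∈ M.accept)) (decide (s.2 ∈ N.accept))}

variable (f : Bool → Bool → Bool) (M : DFA α σ) (N : DFA α τ)

theorem evalFrom_boolOp (s : σ × τ) (w : List α) :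
    (M.boolOp f N).evalFrom s w = (M.evalFrom s.1 w, N.evalFrom s.2 w) := by
  induction w generalizing s with
  | nil => rfl
  | cons a w ih => exact ih _

open Classical in
theorem accepts_boolOp :
    (M.boolOp f N).accepts =
      ({w | f (decide (w ∈ M.accepts)) (decide (w ∈ N.accepts)) = true} : Language α) := by
  ext w
  simp only [mem_accepts, eval, evalFrom_boolOp]
  rfl

theorem stateComplexity_accepts_le_card [Fintype σ] :
    stateComplexity M.accepts ≤ Fintype.card σ :=
  Nat.sInf_le ⟨reindex (Fintype.equivFin σ) M, accepts_reindex _ _⟩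

theorem stateComplexity_accepts_eq_card [Fintype σ] (hreach : Surjective M.eval)
    (hdist : Injective M.acceptsFrom) : stateComplexity M.accepts = Fintype.card σ := by
  refine le_antisymm (M.stateComplexity_accepts_le_card)
    (le_csInf ⟨_, _, accepts_reindex M (Fintype.equivFin σ)⟩ ?_)
  rintro k ⟨A, hA⟩
  suffices Injective (A.eval ∘ surjInv hreach) by simpa using Fintype.card_le_of_injective _ this
  intro s s' h
  apply hdist
  have := congrArg A.acceptsFrom h
  simp only [comp_apply, ← Language.leftQuotient_accepts_apply, hA] at this
  rwa [Language.leftQuotient_accepts_apply, Language.leftQuotient_accepts_apply,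
    surjInv_eq hreach, surjInv_eq hreach] at this

theorem evalFrom_eq_list_prod {ρ : α → Perm σ} (h : ∀ s a, M.step s a = ρ a s) (s : σ)
    (w : List α) : M.evalFrom s w = (w.reverse.map ρ).prod s := by
  induction w generalizing s with
  | nil => rfl
  | cons a w ih => simp [evalFrom_cons, ih, h, mul_apply]

end DFA

theorem Subgroup.exists_list_map_prod_eq_of_mem_closure {G α : Type*} [Group G] [Finite G]
    {ρ : α → G} {g : G} (hg : g ∈ closure (Set.range ρ)) : ∃ w : List α, (w.map ρ).prod = g := by
  rw [← mem_toSubmonoid, closure_toSubmonoid_of_finite, ← FreeMonoid.mrange_lift] at hg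
  obtain ⟨u, rfl⟩ := hg
  exact ⟨u.toList, (FreeMonoid.lift_apply ρ u).symm⟩

open scoped commutatorElement in
theorem Subgroup.Normal.commutator_mem {G : Type*} [Group G] {N : Subgroup G} (hN : N.Normal)
    {a : G} (ha : a ∈ N) (b : G) : ⁅a, b⁆ ∈ N := by
  rw [commutatorElement_def, mul_assoc, mul_assoc, ← mul_assoc b]
  exact N.mul_mem ha (hN.conj_mem _ (N.inv_mem ha) b)

section Alternating

variable {X : Type*} [Fintype X] [DecidableEq X]

theorem exists_mem_alternatingGroup_apply_eq (hX : 3 ≤ Fintype.card X) (p v : X) :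
    ∃ σ ∈ alternatingGroup X, σ p = v := by
  have := alternatingGroup.isPretransitive_of_three_le_card X (by rwa [Nat.card_eq_fintype_card])
  obtain ⟨σ, hσ⟩ := MulAction.exists_smul_eq (alternatingGroup X) p v
  exact ⟨σ, σ.2, hσ⟩

theorem exists_mem_alternatingGroup_decide_apply_eq (hX : 3 ≤ Fintype.card X) (p z : X)
    (b : Bool) : ∃ σ ∈ alternatingGroup X, decide (σ p = z) = b := by
  obtain ⟨v, hv⟩ : ∃ v : X, decide (v = z) = b := by
    cases b
    · obtain ⟨u, hu, -⟩ := ENat.exists_ne_ne_of_three_le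
        (by simpa [ENat.card_eq_coe_fintype_card] using hX) z z
      exact ⟨u, decide_eq_false hu⟩
    · exact ⟨z, decide_eq_true rfl⟩
  obtain ⟨σ, hσ, rfl⟩ := exists_mem_alternatingGroup_apply_eq hX p v
  exact ⟨σ, hσ, hv⟩

theorem exists_mem_alternatingGroup_decide_apply_eq_of_ne (hX : 3 ≤ Fintype.card X) {p p' : X}
    (hp : p ≠ p') (z : X) (b : Bool) :
    ∃ σ ∈ alternatingGroup X, decide (σ p = z) = b ∧ σ p' ≠ z := by
  cases b
  · obtain ⟨u, hup, hup'⟩ := ENat.exists_ne_ne_of_three_le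
      (by simpa [ENat.card_eq_coe_fintype_card] using hX) p p'
    obtain ⟨σ, hσ, hσu⟩ := exists_mem_alternatingGroup_apply_eq hX u z
    refine ⟨σ, hσ, decide_eq_false fun h => hup ?_, fun h => hup' ?_⟩ <;>
      exact σ.injective (hσu.trans h.symm)
  · obtain ⟨σ, hσ, hσp⟩ := exists_mem_alternatingGroup_apply_eq hX p z
    exact ⟨σ, hσ, decide_eq_true hσp, fun h => hp (σ.injective (hσp.trans h.symm))⟩

theorem Subgroup.Normal.alternatingGroup_le_of_isThreeCycle_mem {N : Subgroup (Perm X)}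
    (hN : N.Normal) {γ : Perm X} (hγ : IsThreeCycle γ) (hγN : γ ∈ N) : alternatingGroup X ≤ N := by
  rw [← closure_three_cycles_eq_alternating, Subgroup.closure_le]
  intro δ hδ
  obtain ⟨π, rfl⟩ := isConj_iff.mp (isConj_iff_cycleType_eq.mpr (hγ.trans hδ.symm))
  exact hN.conj_mem γ hγN π

end Alternating

theorem Bool.exists_apply_ne_apply_false_false {f : Bool → Bool → Bool}
    (hf : ∃ y, f true y ≠ f false y) : ∃ b₁ b₂, f b₁ b₂ ≠ f false false := by
  obtain ⟨y, hy⟩ := hf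
  by_cases h : f false y = f false false
  · exact ⟨true, y, h ▸ hy⟩
  · exact ⟨false, y, h⟩

theorem exists_mem_alternatingGroup_separating {X Y : Type*} [Fintype X] [DecidableEq X]
    [Fintype Y] [DecidableEq Y] (hX : 3 ≤ Fintype.card X) (hY : 3 ≤ Fintype.card Y)
    {f : Bool → Bool → Bool} (hf₁ : ∃ y, f true y ≠ f false y) (hf₂ : ∃ x, f x true ≠ f x false)
    (x₀ : X) (y₀ : Y) {s s' : X × Y} (hs : s ≠ s') :
    ∃ σ ∈ alternatingGroup X, ∃ τ ∈ alternatingGroup Y,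
      f (decide (σ s.1 = x₀)) (decide (τ s.2 = y₀)) ≠
        f (decide (σ s'.1 = x₀)) (decide (τ s'.2 = y₀)) := by
  obtain ⟨p, q⟩ := s
  obtain ⟨p', q'⟩ := s'
  by_cases hp : p = p'
  · subst hp
    have hq : q ≠ q' := fun h => hs (by rw [h])
    obtain ⟨x, hx⟩ := hf₂
    obtain ⟨σ, hσ, hσp⟩ := exists_mem_alternatingGroup_decide_apply_eq hX p x₀ x
    obtain ⟨τ, hτ, hτq, hτq'⟩ := exists_mem_alternatingGroup_decide_apply_eq_of_ne hY hq y₀ true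
    exact ⟨σ, hσ, τ, hτ, by simpa [hσp, hτq, hτq'] using hx⟩
  by_cases hq : q = q'
  · subst hq
    obtain ⟨y, hy⟩ := hf₁
    obtain ⟨σ, hσ, hσp, hσp'⟩ := exists_mem_alternatingGroup_decide_apply_eq_of_ne hX hp x₀ true
    obtain ⟨τ, hτ, hτq⟩ := exists_mem_alternatingGroup_decide_apply_eq hY q y₀ y
    exact ⟨σ, hσ, τ, hτ, by simpa [hσp, hσp', hτq] using hy⟩
  obtain ⟨b₁, b₂, hb⟩ := Bool.exists_apply_ne_apply_false_false hf₁
  obtain ⟨σ, hσ, hσp, hσp'⟩ := exists_mem_alternatingGroup_decide_apply_eq_of_ne hX hp x₀ b₁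
  obtain ⟨τ, hτ, hτq, hτq'⟩ := exists_mem_alternatingGroup_decide_apply_eq_of_ne hY hq y₀ b₂
  exact ⟨σ, hσ, τ, hτ, by simpa [hσp, hσp', hτq, hτq'] using hb⟩

section PermutationAutomata

variable {α X Y : Type*} {M : DFA α X} {N : DFA α Y} {ρ : α → Perm X × Perm Y}

theorem DFA.exists_evalFrom_boolOp_eq_of_mem_closure [Finite X] [Finite Y]
    (hM : ∀ x a, M.step x a = (ρ a).1 x) (hN : ∀ y a, N.step y a = (ρ a).2 y)
    (f : Bool → Bool → Bool) {σ : Perm X} {τ : Perm Y}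
    (hστ : (σ, τ) ∈ Subgroup.closure (Set.range ρ)) :
    ∃ w, ∀ s, (M.boolOp f N).evalFrom s w = Prod.map σ τ s := by
  obtain ⟨w, hw⟩ := Subgroup.exists_list_map_prod_eq_of_mem_closure hστ
  refine ⟨w.reverse, fun s => ?_⟩
  have h₁ := map_list_prod (MonoidHom.fst (Perm X) (Perm Y)) (w.map ρ)
  have h₂ := map_list_prod (MonoidHom.snd (Perm X) (Perm Y)) (w.map ρ)
  simp only [hw, MonoidHom.coe_fst, MonoidHom.coe_snd, List.map_map] at h₁ h₂
  rw [DFA.evalFrom_boolOp, M.evalFrom_eq_list_prod hM, N.evalFrom_eq_list_prod hN,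
    List.reverse_reverse, h₁, h₂]
  rfl

theorem DFA.stateComplexity_boolOp_of_alternatingGroup_prod_le [Fintype X] [DecidableEq X]
    [Fintype Y] [DecidableEq Y]
    (hX : 3 ≤ Fintype.card X) (hY : 3 ≤ Fintype.card Y) {x₀ : X} {y₀ : Y}
    (hMacc : M.accept = {x₀}) (hNacc : N.accept = {y₀})
    (hM : ∀ x a, M.step x a = (ρ a).1 x) (hN : ∀ y a, N.step y a = (ρ a).2 y)
    (hρ : (alternatingGroup X).prod (alternatingGroup Y) ≤ Subgroup.closure (Set.range ρ))
    {f : Bool → Bool → Bool} (hf₁ : ∃ y, f true y ≠ f false y)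
    (hf₂ : ∃ x, f x true ≠ f x false) :
    stateComplexity (M.boolOp f N).accepts = Fintype.card X * Fintype.card Y := by
  rw [DFA.stateComplexity_accepts_eq_card, Fintype.card_prod]
  · rintro ⟨p, q⟩
    obtain ⟨σ, hσ, hσp⟩ := exists_mem_alternatingGroup_apply_eq hX M.start p
    obtain ⟨τ, hτ, hτq⟩ := exists_mem_alternatingGroup_apply_eq hY N.start q
    obtain ⟨w, hw⟩ := exists_evalFrom_boolOp_eq_of_mem_closure hM hN f (hρ ⟨hσ, hτ⟩)
    exact ⟨w, by simp [DFA.eval, hw, hσp, hτq]⟩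
  · intro s s' hss'
    by_contra hs
    obtain ⟨σ, hσ, τ, hτ, hne⟩ := exists_mem_alternatingGroup_separating hX hY hf₁ hf₂ x₀ y₀ hs
    obtain ⟨w, hw⟩ := exists_evalFrom_boolOp_eq_of_mem_closure hM hN f (hρ ⟨hσ, hτ⟩)
    have hmem := congrArg (w ∈ ·) hss'
    simp only [DFA.mem_acceptsFrom, hw, DFA.boolOp_accept, hMacc, hNacc, Set.mem_singleton_iff,
      Set.mem_ofPred_eq, Prod.map_fst, Prod.map_snd, eq_iff_iff] at hmem
    exact hne (Bool.eq_iff_iff.mpr hmem)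

end PermutationAutomata

section LetterGroup

variable (k l : ℕ)

def swapZeroOne : Perm (Fin (k + 2)) := swap 0 1

/-- The cycle `(1 2 … k+1)`, as `(0 1) * (0 1 … k+1)`. -/
def tailCycle : Perm (Fin (k + 2)) := swap 0 1 * finRotate (k + 2)

/-- Generated by the actions of the letters `a` and `b` on the two automata. -/
def letterGroup : Subgroup (Perm (Fin (k + 2)) × Perm (Fin (l + 2))) :=
  Subgroup.closure {(tailCycle k, swapZeroOne l), (swapZeroOne k, tailCycle l)}

variable {k l}

theorem swapZeroOne_apply_val (q : Fin (k + 2)) :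
    (swapZeroOne k q).val = if q.val = 0 then 1 else if q.val = 1 then 0 else q.val := by
  rw [swapZeroOne, swap_apply_def]
  simp only [Fin.ext_iff, Fin.val_zero, Fin.val_one]
  split_ifs <;> rfl

theorem finRotate_apply_val (q : Fin (k + 2)) :
    (finRotate (k + 2) q).val = if q.val = k + 2 - 1 then 0 else q.val + 1 := by
  rw [finRotate_apply, Fin.val_add_one]
  simp only [Fin.ext_iff, Fin.val_last]
  rfl

theorem tailCycle_apply_val (q : Fin (k + 2)) :
    (tailCycle k q).val = if q.val = 0 then 0 else if q.val = k + 2 - 1 then 1 else q.val + 1 := by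
  rw [tailCycle, mul_apply, ← swapZeroOne, swapZeroOne_apply_val, finRotate_apply_val]
  split_ifs <;> simp_all

theorem closure_tailCycle_swapZeroOne :
    Subgroup.closure {tailCycle k, swapZeroOne k} = ⊤ := by
  have hrot := closure_cycle_adjacent_swap (isCycle_finRotate_of_le (n := k + 2) (by omega))
    (support_finRotate_of_le (by omega)) 0
  rw [finRotate_apply, zero_add] at hrot
  rw [eq_top_iff, ← hrot, Subgroup.closure_le, Set.insert_subset_iff, Set.singleton_subset_iff]
  have htr : swapZeroOne k ∈ Subgroup.closure {tailCycle k, swapZeroOne k} :=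
    Subgroup.subset_closure (by simp)
  refine ⟨?_, htr⟩
  have hrot_eq : finRotate (k + 2) = swapZeroOne k * tailCycle k := by
    rw [tailCycle, ← mul_assoc, swapZeroOne, swap_mul_self, one_mul]
  rw [hrot_eq]
  exact Subgroup.mul_mem _ htr (Subgroup.subset_closure (by simp))

theorem fst_surjective_letterGroup :
    Surjective (Prod.fst ∘ (letterGroup k l).subtype) := by
  intro σ
  have hσ : σ ∈ (letterGroup k l).map (MonoidHom.fst _ _) := by
    rw [letterGroup, MonoidHom.map_closure, Set.image_pair]
    exact (closure_tailCycle_swapZeroOne (k := k)).symm ▸ Subgroup.mem_top σ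
  obtain ⟨g, hg, rfl⟩ := Subgroup.mem_map.mp hσ
  exact ⟨⟨g, hg⟩, rfl⟩

theorem map_prodComm_letterGroup :
    (letterGroup k l).map (MulEquiv.prodComm.toMonoidHom) = letterGroup l k := by
  rw [letterGroup, MonoidHom.map_closure, Set.image_pair, letterGroup, Set.pair_comm]
  rfl

theorem goursatSnd_letterGroup : (letterGroup k l).goursatSnd = (letterGroup l k).goursatFst := by
  ext τ
  rw [Subgroup.mem_goursatSnd, Subgroup.mem_goursatFst, ← map_prodComm_letterGroup,
    Subgroup.mem_map_equiv]
  rfl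

end LetterGroup

section ThreeCycles

open scoped commutatorElement

variable {k l : ℕ}

theorem isThreeCycle_commutator_sq_tailCycle (hk : 2 ≤ k) :
    IsThreeCycle ⁅tailCycle k ^ 2, swapZeroOne k⁆ := by
  have hc (q : Fin (k + 2)) (h0 : q.val ≠ 0) (h1 : q.val ≠ k + 1) :
      (tailCycle k q).val = q.val + 1 := by
    rw [tailCycle_apply_val, if_neg h0, if_neg (by omega)]
  have hc0 : tailCycle k 0 = 0 := Fin.ext (by simp [tailCycle_apply_val])
  have hc1 : tailCycle k 1 = ⟨2, by omega⟩ :=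
    Fin.ext (by rw [hc 1 (by simp) (by simp; omega)]; simp)
  have hc2 : tailCycle k ⟨2, by omega⟩ = ⟨3, by omega⟩ :=
    Fin.ext (hc _ (by simp) (by simp; omega))
  rw [commutatorElement_def, swapZeroOne, swap_inv, ← swap_apply_apply, sq, mul_apply, mul_apply,
    hc0, hc0, hc1, hc2]
  exact isThreeCycle_swap_mul_swap_same (by simp) (by simp) (by simp)

theorem isThreeCycle_sq_tailCycle_mul_swapZeroOne :
    IsThreeCycle ((tailCycle 1 * swapZeroOne 1) ^ 2) := by
  rw [show (tailCycle 1 * swapZeroOne 1) ^ 2 = swap 0 2 * swap 0 1 by decide]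
  exact isThreeCycle_swap_mul_swap_same (by decide) (by decide) (by decide)

theorem alternatingGroup_le_goursatFst_letterGroup_of_two_le (hk : 2 ≤ k) :
    alternatingGroup (Fin (k + 2)) ≤ (letterGroup k l).goursatFst := by
  have hN := Subgroup.normal_goursatFst (fst_surjective_letterGroup (k := k) (l := l))
  have hg : (tailCycle k, swapZeroOne l) ∈ letterGroup k l := Subgroup.subset_closure (by simp)
  have hsq : tailCycle k ^ 2 ∈ (letterGroup k l).goursatFst := by
    rw [Subgroup.mem_goursatFst]
    convert pow_mem hg 2 using 1
    simp [sq, swapZeroOne]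
  exact hN.alternatingGroup_le_of_isThreeCycle_mem (isThreeCycle_commutator_sq_tailCycle hk)
    (hN.commutator_mem hsq _)

theorem alternatingGroup_le_goursatFst_letterGroup_one (hl : 2 ≤ l) :
    alternatingGroup (Fin (1 + 2)) ≤ (letterGroup 1 l).goursatFst := by
  have hN := Subgroup.normal_goursatFst (fst_surjective_letterGroup (k := 1) (l := l))
  set g := ((tailCycle 1, swapZeroOne l) * (swapZeroOne 1, tailCycle l)) ^ 2
  have hg : g ∈ letterGroup 1 l :=
    pow_mem (mul_mem (Subgroup.subset_closure (by simp)) (Subgroup.subset_closure (by simp))) 2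
  have hg₂ : g.2 ∈ (letterGroup 1 l).goursatSnd := by
    rw [goursatSnd_letterGroup]
    apply alternatingGroup_le_goursatFst_letterGroup_of_two_le hl
    simp [g, mem_alternatingGroup]
  have hg₁ : g.1 ∈ (letterGroup 1 l).goursatFst := by
    clear_value g
    rw [Subgroup.mem_goursatSnd] at hg₂
    rw [Subgroup.mem_goursatFst]
    convert mul_mem hg (inv_mem hg₂) using 1
    ext <;> simp
  exact hN.alternatingGroup_le_of_isThreeCycle_mem isThreeCycle_sq_tailCycle_mul_swapZeroOne hg₁

theorem alternatingGroup_le_goursatFst_letterGroup (hk : 1 ≤ k) (hkl : 2 ≤ k ∨ 2 ≤ l) :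
    alternatingGroup (Fin (k + 2)) ≤ (letterGroup k l).goursatFst := by
  obtain rfl | hk2 : k = 1 ∨ 2 ≤ k := by omega
  · exact alternatingGroup_le_goursatFst_letterGroup_one (by omega)
  · exact alternatingGroup_le_goursatFst_letterGroup_of_two_le hk2

theorem alternatingGroup_prod_le_letterGroup (hk : 1 ≤ k) (hl : 1 ≤ l) (hkl : 2 ≤ k ∨ 2 ≤ l) :
    (alternatingGroup (Fin (k + 2))).prod (alternatingGroup (Fin (l + 2))) ≤ letterGroup k l := by
  refine le_trans (Subgroup.prod_mono ?_ ?_) (Subgroup.goursatFst_prod_goursatSnd_le _)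
  · exact alternatingGroup_le_goursatFst_letterGroup hk hkl
  · rw [goursatSnd_letterGroup]
    exact alternatingGroup_le_goursatFst_letterGroup hl hkl.symm

end ThreeCycles

/-- For `m, n ≥ 3` with `(m,n) ≠ (3,3)`: let `L_m` be the language of the DFA over
`{a,b}` (encoded as `Fin 2`: `a = 0` the cycle `(1,…,m−1)` fixing `0`, `b = 1` the
transposition `(0,1)`; initial `0`; final `m−1`), and let `K_n` be the language of the
DFA with the roles of `a` and `b` swapped (`b` the cycle `(1,…,n−1)`, `a` the
transposition `(0,1)`). Then for every proper binary boolean operation `∘`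
(given pointwise by `f : Bool → Bool → Bool` depending on both arguments),
`κ(L_m ∘ K_n) = m·n`. -/
theorem boolean_operation_complexity (m n : ℕ) (hm : 3 ≤ m) (hn : 3 ≤ n)
    (hmn : ¬(m = 3 ∧ n = 3))
    (M : DFA (Fin 2) (Fin m)) (N : DFA (Fin 2) (Fin n))
    (hMaccept : M.accept = {⟨m - 1, by omega⟩})
    (hMa : ∀ q : Fin m,
      (M.step q 0).val = if q.val = 0 then 0 else if q.val = m - 1 then 1 else q.val + 1)
    (hMb : ∀ q : Fin m,
      (M.step q 1).val = if q.val = 0 then 1 else if q.val = 1 then 0 else q.val)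
    (hNaccept : N.accept = {⟨n - 1, by omega⟩})
    (hNb : ∀ q : Fin n,
      (N.step q 1).val = if q.val = 0 then 0 else if q.val = n - 1 then 1 else q.val + 1)
    (hNa : ∀ q : Fin n,
      (N.step q 0).val = if q.val = 0 then 1 else if q.val = 1 then 0 else q.val)
    (f : Bool → Bool → Bool)
    (hf1 : ∃ y, f true y ≠ f false y)
    (hf2 : ∃ x, f x true ≠ f x false) :
    stateComplexity
        ({w : List (Fin 2) |
          f (@decide (w ∈ M.accepts) (Classical.propDecidable _))
            (@decide (w ∈ N.accepts) (Classical.propDecidable _)) = true} :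
          Language (Fin 2)) = m * n := by
  obtain ⟨k, rfl⟩ : ∃ k, m = k + 2 := ⟨m - 2, by omega⟩
  obtain ⟨l, rfl⟩ : ∃ l, n = l + 2 := ⟨n - 2, by omega⟩
  let ρ : Fin 2 → Perm (Fin (k + 2)) × Perm (Fin (l + 2)) :=
    ![(tailCycle k, swapZeroOne l), (swapZeroOne k, tailCycle l)]
  have hMρ : ∀ q a, M.step q a = (ρ a).1 q := by
    intro q a
    fin_cases a
    · exact Fin.ext ((hMa q).trans (tailCycle_apply_val q).symm)
    · exact Fin.ext ((hMb q).trans (swapZeroOne_apply_val q).symm)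
  have hNρ : ∀ q a, N.step q a = (ρ a).2 q := by
    intro q a
    fin_cases a
    · exact Fin.ext ((hNa q).trans (swapZeroOne_apply_val q).symm)
    · exact Fin.ext ((hNb q).trans (tailCycle_apply_val q).symm)
  have hρ : (alternatingGroup (Fin (k + 2))).prod (alternatingGroup (Fin (l + 2))) ≤
      Subgroup.closure (Set.range ρ) := by
    rw [Matrix.range_cons, Matrix.range_cons, Matrix.range_empty, Set.union_empty,
      Set.singleton_union]
    exact alternatingGroup_prod_le_letterGroup (by omega) (by omega) (by omega)
  rw [← DFA.accepts_boolOp, DFA.stateComplexity_boolOp_of_alternatingGroup_prod_le (by simp; omega)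
    (by simp; omega) hMaccept hNaccept hMρ hNρ hρ hf1 hf2, Fintype.card_fin, Fintype.card_fin]
end
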